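/- Let x be an infinite word over an alphabet A, let N ≥ 2 and i ≥ 1, and let w₁ and w₂ be closed factors of x of length N with frontiers u₁ and u₂ respectively. Suppose there exists a path from w₁ to w₂ in the Rauzy graph of order N of x whose vertices include at most n distinct open factors (equivalently, there exists a finite word z of length N + i such that w₁ is a prefix of z, w₂ is a suffix of z, every factor of z of length N + 1 is a factor of x, and the number of distinct open factors of z of length N is at most n). Then | |u₁| − |u₂| | ≤ n. -/
import Mathlib


/-- `w` occurs in the infinite word `x` at position `m`. -/
def OccursAt {A : Type*} (x : ℕ → A) (w : List A) (m : ℕ) : Prop :=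
  w = (List.range w.length).map fun i => x (m + i)

/-- `w` is a factor of the infinite word `x`. -/
def IsFactorOf {A : Type*} (x : ℕ → A) (w : List A) : Prop :=
  ∃ m, OccursAt x w m

/-- `w` is a recurrent factor of `x` : it occurs at infinitely many positions. -/
def IsRecurrentFactor {A : Type*} (x : ℕ → A) (w : List A) : Prop :=
  ∀ N, ∃ m, N ≤ m ∧ OccursAt x w m

/-- The set of positions at which `u` occurs inside the finite word `w`. -/
def occSet {A : Type*} (u w : List A) : Set ℕ := {i | u <+: w.drop i}

/-- `u` is a border of `w`: nonempty, strictly shorter than `w`,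
and both a prefix and a suffix of `w`. -/
def IsBorder {A : Type*} (u w : List A) : Prop :=
  0 < u.length ∧ u.length < w.length ∧ u <+: w ∧ u <:+ w

/-- A finite word is closed if it is a single letter or it has a border
occurring exactly twice in it. -/
def IsClosedWord {A : Type*} (w : List A) : Prop :=
  w.length = 1 ∨ ∃ u, IsBorder u w ∧ (occSet u w).ncard = 2

/-- A nonempty finite word is open if it is not closed. -/
def IsOpenWord {A : Type*} (w : List A) : Prop :=
  w ≠ [] ∧ ¬ IsClosedWord w

/-- The frontier of a closed word is its longest border. -/
def IsFrontier {A : Type*} (u w : List A) : Prop :=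
  IsBorder u w ∧ ∀ v, IsBorder v w → v.length ≤ u.length

/-- number of closed factors of `x` of length `n`. -/
noncomputable def clComp {A : Type*} (x : ℕ → A) (n : ℕ) : ℕ :=
  {w : List A | w.length = n ∧ IsFactorOf x w ∧ IsClosedWord w}.ncard

/-- number of open factors of `x` of length `n`. -/
noncomputable def opComp {A : Type*} (x : ℕ → A) (n : ℕ) : ℕ :=
  {w : List A | w.length = n ∧ IsFactorOf x w ∧ IsOpenWord w}.ncard

/-- `x` is ultimately periodic: `x = u v v v ⋯` for some `u`, `v` with `v` nonempty,
expressed via: every finite word `u v^n` is a prefix of `x`. -/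
def UltPeriodic {A : Type*} (x : ℕ → A) : Prop :=
  ∃ u v : List A, v ≠ [] ∧ ∀ n : ℕ, OccursAt x (u ++ (List.replicate n v).flatten) 0

/-- `S ⊆ ℕ` is syndetic with gaps smaller than `d`: `S ∩ [n, n+d] ≠ ∅` for all `n`. -/
def SyndeticWithGaps (S : Set ℕ) (d : ℕ) : Prop :=
  ∀ n : ℕ, ∃ m ∈ S, n ≤ m ∧ m ≤ n + d

/-- `S ⊆ ℕ` is syndetic. -/
def Syndetic (S : Set ℕ) : Prop :=
  ∃ d : ℕ, SyndeticWithGaps S d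

section Aux

variable {A : Type*}

/-- `v` has a (possibly empty) repeated suffix of length `t`. -/
def RSuf (v : List A) (t : ℕ) : Prop :=
  t < v.length ∧ ∃ p, p + t < v.length ∧ v.drop (v.length - t) <+: v.drop p

/-- `v` has a (possibly empty) repeated prefix of length `t`. -/
def RPre (v : List A) (t : ℕ) : Prop :=
  t < v.length ∧ ∃ p, 0 < p ∧ p + t ≤ v.length ∧ v.take t <+: v.drop p

noncomputable def mrs (v : List A) : ℕ :=
  @Nat.findGreatest (RSuf v) (Classical.decPred _) v.length

noncomputable def mrp (v : List A) : ℕ :=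
  @Nat.findGreatest (RPre v) (Classical.decPred _) v.length

lemma le_mrs {v : List A} {t : ℕ} (h : RSuf v t) : t ≤ mrs v := by
  letI : DecidablePred (RSuf v) := Classical.decPred _
  exact Nat.le_findGreatest (P := RSuf v) h.1.le h

lemma mrs_spec {v : List A} (h : mrs v ≠ 0) : RSuf v (mrs v) := by
  letI : DecidablePred (RSuf v) := Classical.decPred _
  exact Nat.findGreatest_of_ne_zero (P := RSuf v) rfl h

lemma le_mrp {v : List A} {t : ℕ} (h : RPre v t) : t ≤ mrp v := by
  letI : DecidablePred (RPre v) := Classical.decPred _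
  exact Nat.le_findGreatest (P := RPre v) h.1.le h

lemma mrp_spec {v : List A} (h : mrp v ≠ 0) : RPre v (mrp v) := by
  letI : DecidablePred (RPre v) := Classical.decPred _
  exact Nat.findGreatest_of_ne_zero (P := RPre v) rfl h

lemma prefix_of_take {u l : List A} {k : ℕ} (h : u <+: l) (hk : u.length ≤ k) :
    u <+: l.take k := by
  have := h.take k
  rwa [List.take_of_length_le hk] at this

lemma occSet_finite {u w : List A} (hu : u ≠ []) : (occSet u w).Finite := by
  apply (Set.finite_Iio w.length).subset
  intro p hp
  have hp' : u <+: w.drop p := hp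
  have h1 : u.length ≤ (w.drop p).length := hp'.length_le
  have h2 : 0 < u.length := List.length_pos_iff.mpr hu
  rw [List.length_drop] at h1
  simp only [Set.mem_Iio]
  omega

lemma occSet_pair {u0 w : List A} (hb : IsBorder u0 w) (h2 : (occSet u0 w).ncard = 2) :
    occSet u0 w = {0, w.length - u0.length} := by
  have hu0 : u0 ≠ [] := by
    have := hb.1
    intro h; simp [h] at this
  have h0 : (0:ℕ) ∈ occSet u0 w := by
    show u0 <+: w.drop 0
    simpa using hb.2.2.1
  have hN : (w.length - u0.length) ∈ occSet u0 w := by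
    show u0 <+: w.drop (w.length - u0.length)
    rw [← List.suffix_iff_eq_drop.mp hb.2.2.2]
  have hsub : ({0, w.length - u0.length} : Set ℕ) ⊆ occSet u0 w := by
    intro p hp
    simp only [Set.mem_insert_iff, Set.mem_singleton_iff] at hp
    rcases hp with rfl | rfl <;> assumption
  have hne : (0:ℕ) ≠ w.length - u0.length := by
    have h1 := hb.1; have h2 := hb.2.1; omega
  exact (Set.eq_of_subset_of_ncard_le hsub
    (by rw [h2, Set.ncard_pair hne]) (occSet_finite hu0)).symm

lemma border_RSuf {u w : List A} (hb : IsBorder u w) : RSuf w u.length := by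
  refine ⟨hb.2.1, 0, by simpa using hb.2.1, ?_⟩
  rw [← List.suffix_iff_eq_drop.mp hb.2.2.2]
  simpa using hb.2.2.1

lemma border_RPre {u w : List A} (hb : IsBorder u w) : RPre w u.length := by
  have h1 := hb.1; have h2 := hb.2.1
  refine ⟨hb.2.1, w.length - u.length, by omega, by omega, ?_⟩
  rw [← List.prefix_iff_eq_take.mp hb.2.2.1, ← List.suffix_iff_eq_drop.mp hb.2.2.2]

lemma RSuf_mono {v : List A} {s t : ℕ} (ht : RSuf v t) (hst : s ≤ t) : RSuf v s := by
  obtain ⟨htl, p, hpt, hpre⟩ := ht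
  refine ⟨by omega, p + (t - s), by omega, ?_⟩
  have e : v.drop (v.length - s) = (v.drop (v.length - t)).drop (t - s) := by
    rw [List.drop_drop]; congr 1; omega
  rw [e]
  have h := hpre.drop (t - s)
  rwa [show (v.drop p).drop (t - s) = v.drop (p + (t - s)) from List.drop_drop ..] at h

lemma RPre_mono {v : List A} {s t : ℕ} (ht : RPre v t) (hst : s ≤ t) : RPre v s := by
  obtain ⟨htl, p, hp0, hpt, hpre⟩ := ht
  refine ⟨by omega, p, hp0, by omega, ?_⟩
  rw [show v.take s = (v.take t).take s from by rw [List.take_take, min_eq_left hst]]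
  exact (List.take_prefix _ _).trans hpre

lemma RSuf_le_of_closed {u0 w : List A} {t : ℕ} (hb : IsBorder u0 w)
    (h2 : (occSet u0 w).ncard = 2) (ht : RSuf w t) : t ≤ u0.length := by
  by_contra hcon
  push_neg at hcon
  obtain ⟨htl, p, hpt, hpre⟩ := ht
  have hb1 := hb.1; have hb2 := hb.2.1
  have hu0 : u0 = (w.drop (w.length - t)).drop (t - u0.length) := by
    rw [List.drop_drop, show w.length - t + (t - u0.length) = w.length - u0.length from by omega]
    exact List.suffix_iff_eq_drop.mp hb.2.2.2
  have hocc : (p + (t - u0.length)) ∈ occSet u0 w := by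
    show u0 <+: w.drop (p + (t - u0.length))
    have h := hpre.drop (t - u0.length)
    rwa [← hu0, List.drop_drop] at h
  rw [occSet_pair hb h2] at hocc
  simp only [Set.mem_insert_iff, Set.mem_singleton_iff] at hocc
  omega

lemma RPre_le_of_closed {u0 w : List A} {t : ℕ} (hb : IsBorder u0 w)
    (h2 : (occSet u0 w).ncard = 2) (ht : RPre w t) : t ≤ u0.length := by
  by_contra hcon
  push_neg at hcon
  obtain ⟨htl, p, hp0, hpt, hpre⟩ := ht
  have hb1 := hb.1; have hb2 := hb.2.1
  have hu0 : u0 = (w.take t).take u0.length := by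
    rw [List.take_take, min_eq_left (by omega : u0.length ≤ t)]
    exact List.prefix_iff_eq_take.mp hb.2.2.1
  have hocc : p ∈ occSet u0 w := by
    show u0 <+: w.drop p
    rw [hu0]
    exact (List.take_prefix _ _).trans hpre
  rw [occSet_pair hb h2] at hocc
  simp only [Set.mem_insert_iff, Set.mem_singleton_iff] at hocc
  omega

lemma frontier_len {u u0 w : List A} (hb : IsBorder u0 w)
    (h2 : (occSet u0 w).ncard = 2) (hf : IsFrontier u w) : u.length = u0.length :=
  le_antisymm (RSuf_le_of_closed hb h2 (border_RSuf hf.1)) (hf.2 u0 hb)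

lemma mrs_eq_frontier {u u0 w : List A} (hb : IsBorder u0 w)
    (h2 : (occSet u0 w).ncard = 2) (hf : IsFrontier u w) : mrs w = u.length := by
  have h1 : u0.length ≤ mrs w := le_mrs (border_RSuf hb)
  have h3 : mrs w ≤ u0.length := by
    by_cases h0 : mrs w = 0
    · omega
    · exact RSuf_le_of_closed hb h2 (mrs_spec h0)
  have h4 := frontier_len hb h2 hf
  omega

lemma mrp_eq_frontier {u u0 w : List A} (hb : IsBorder u0 w)
    (h2 : (occSet u0 w).ncard = 2) (hf : IsFrontier u w) : mrp w = u.length := by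
  have h1 : u0.length ≤ mrp w := le_mrp (border_RPre hb)
  have h3 : mrp w ≤ u0.length := by
    by_cases h0 : mrp w = 0
    · omega
    · exact RPre_le_of_closed hb h2 (mrp_spec h0)
  have h4 := frontier_len hb h2 hf
  omega

lemma closed_spec {w : List A} (hc : IsClosedWord w) (hw : 2 ≤ w.length) :
    ∃ u0, IsBorder u0 w ∧ (occSet u0 w).ncard = 2 := by
  rcases hc with h | h
  · omega
  · exact h

lemma RSuf_step {y : List A} {N t : ℕ} (hy : y.length = N + 1)
    (ht : RSuf (y.drop 1) t) (h1 : 1 ≤ t) : RSuf (y.take N) (t - 1) := by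
  obtain ⟨htl, p, hpt, hpre⟩ := ht
  have hlen : (y.drop 1).length = N := by simp [hy]
  have hlen2 : (y.take N).length = N := by simp [hy]
  rw [hlen] at htl hpt hpre
  refine ⟨by omega, p + 1, by omega, ?_⟩
  rw [hlen2]
  have E1 : (y.take N).drop (N - (t - 1)) = (y.drop (N - t + 1)).take (t - 1) := by
    rw [List.drop_take, show N - (t - 1) = N - t + 1 from by omega,
      show N - (N - t + 1) = t - 1 from by omega]
  have E2 : (y.take N).drop (p + 1) = (y.drop (p + 1)).take (N - (p + 1)) := List.drop_take ..
  rw [E1, E2]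
  rw [List.drop_drop, List.drop_drop, show 1 + (N - t) = N - t + 1 from by omega,
    show 1 + p = p + 1 from by omega] at hpre
  refine prefix_of_take ((List.take_prefix _ _).trans hpre) ?_
  rw [List.length_take, List.length_drop, hy]
  omega

lemma RPre_step {y : List A} {N t : ℕ} (hy : y.length = N + 1)
    (ht : RPre (y.take N) t) (h1 : 1 ≤ t) : RPre (y.drop 1) (t - 1) := by
  obtain ⟨htl, p, hp0, hpt, hpre⟩ := ht
  have hlen : (y.drop 1).length = N := by simp [hy]
  have hlen2 : (y.take N).length = N := by simp [hy]
  rw [hlen2] at htl hpt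
  refine ⟨by omega, p, hp0, by omega, ?_⟩
  have E1 : ((y.take N).take t).drop 1 = (y.drop 1).take (t - 1) := by
    rw [List.take_take, min_eq_left (by omega : t ≤ N), List.drop_take]
  have E2 : (y.drop 1).drop p = y.drop (p + 1) := by
    rw [List.drop_drop]; congr 1; omega
  have S1 := hpre.drop 1
  rw [List.drop_drop] at S1
  have S2 : (y.take N).drop (p + 1) <+: y.drop (p + 1) := by
    rw [List.drop_take]; exact List.take_prefix _ _
  rw [← E1, E2]
  exact S1.trans S2

lemma RSuf_step_closed {y u0 : List A} {N t : ℕ} (hy : y.length = N + 1)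
    (hb : IsBorder u0 (y.take N)) (h2 : (occSet u0 (y.take N)).ncard = 2)
    (ht : RSuf (y.drop 1) t) : t ≤ u0.length := by
  by_contra hcon
  push_neg at hcon
  have hlen : (y.drop 1).length = N := by simp [hy]
  have hlen2 : (y.take N).length = N := by simp [hy]
  have hbN : u0.length < N := by have := hb.2.1; omega
  obtain ⟨_, p, hpt, hpre⟩ := RSuf_mono ht (by omega : u0.length + 1 ≤ t)
  rw [hlen] at hpt hpre
  rw [List.drop_drop, List.drop_drop, show 1 + (N - (u0.length + 1)) = N - u0.length from by omega,
    show 1 + p = p + 1 from by omega] at hpre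
  have hu0 : u0 = (y.drop (N - u0.length)).take u0.length := by
    have hsuf := List.suffix_iff_eq_drop.mp hb.2.2.2
    rwa [hlen2, List.drop_take, show N - (N - u0.length) = u0.length from by omega] at hsuf
  have hocc : (p + 1) ∈ occSet u0 (y.take N) := by
    show u0 <+: (y.take N).drop (p + 1)
    rw [List.drop_take]
    refine prefix_of_take ?_ (by omega)
    rw [hu0]
    exact (List.take_prefix _ _).trans hpre
  rw [occSet_pair hb h2, hlen2] at hocc
  simp only [Set.mem_insert_iff, Set.mem_singleton_iff] at hocc
  omega

lemma RPre_step_closed {y u0 : List A} {N t : ℕ} (hy : y.length = N + 1)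
    (hb : IsBorder u0 (y.drop 1)) (h2 : (occSet u0 (y.drop 1)).ncard = 2)
    (ht : RPre (y.take N) t) : t ≤ u0.length := by
  by_contra hcon
  push_neg at hcon
  have hlen : (y.drop 1).length = N := by simp [hy]
  have hlen2 : (y.take N).length = N := by simp [hy]
  have hbN : u0.length < N := by have := hb.2.1; omega
  obtain ⟨_, p, hp0, hpt, hpre⟩ := RPre_mono ht (by omega : u0.length + 1 ≤ t)
  rw [hlen2] at hpt
  have hu0 : u0 = ((y.take N).take (u0.length + 1)).drop 1 := by
    rw [List.take_take, min_eq_left (by omega : u0.length + 1 ≤ N), List.drop_take,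
      show u0.length + 1 - 1 = u0.length from rfl]
    exact List.prefix_iff_eq_take.mp hb.2.2.1
  have S1 := hpre.drop 1
  rw [List.drop_drop] at S1
  have S2 : (y.take N).drop (p + 1) <+: y.drop (p + 1) := by
    rw [List.drop_take]; exact List.take_prefix _ _
  have hocc : p ∈ occSet u0 (y.drop 1) := by
    show u0 <+: (y.drop 1).drop p
    rw [List.drop_drop, show 1 + p = p + 1 from by omega, hu0]
    exact S1.trans S2
  rw [occSet_pair hb h2, hlen] at hocc
  simp only [Set.mem_insert_iff, Set.mem_singleton_iff] at hocc
  omega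

end Aux

/-- If `w₁`, `w₂` are closed factors of `x` of length `N` with frontiers
`u₁`, `u₂`, and there is a path from `w₁` to `w₂` in the Rauzy graph of order
`N` of `x` containing at most `n` distinct open factors, then
`||u₁| − |u₂|| ≤ n`. -/
theorem frontier_length_diff_le_open_count
    {A : Type*} (x : ℕ → A) (N i n : ℕ) (hN : 2 ≤ N) (hi : 1 ≤ i)
    (w₁ w₂ u₁ u₂ : List A)
    (hw₁ : IsFactorOf x w₁) (hw₂ : IsFactorOf x w₂)
    (hl₁ : w₁.length = N) (hl₂ : w₂.length = N)
    (hc₁ : IsClosedWord w₁) (hc₂ : IsClosedWord w₂)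
    (hf₁ : IsFrontier u₁ w₁) (hf₂ : IsFrontier u₂ w₂)
    (z : List A) (hz : z.length = N + i)
    (hpre : w₁ <+: z) (hsuf : w₂ <:+ z)
    (hedges : ∀ u : List A, u <:+: z → u.length = N + 1 → IsFactorOf x u)
    (hopen : {u : List A | u <:+: z ∧ u.length = N ∧ IsOpenWord u}.ncard ≤ n) :
    |(u₁.length : ℤ) - (u₂.length : ℤ)| ≤ (n : ℤ) := by
  classical
  set v : ℕ → List A := fun j => (z.drop j).take N with hv
  have hvlen : ∀ j, j ≤ i → (v j).length = N := by
    intro j hj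
    simp only [hv, List.length_take, List.length_drop, hz]
    omega
  have hv0 : v 0 = w₁ := by
    have h := List.prefix_iff_eq_take.mp hpre
    rw [hl₁] at h
    simp only [hv, List.drop_zero]
    exact h.symm
  have hvi : v i = w₂ := by
    have h := List.suffix_iff_eq_drop.mp hsuf
    have h' : w₂ = z.drop i := by
      rw [h]; congr 1; rw [hz, hl₂]; omega
    simp only [hv]
    rw [← h']
    exact List.take_of_length_le (by rw [hl₂])
  have hedge : ∀ j, j < i → ((z.drop j).take (N+1)).length = N + 1
      ∧ ((z.drop j).take (N+1)).take N = v j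
      ∧ ((z.drop j).take (N+1)).drop 1 = v (j+1) := by
    intro j hj
    refine ⟨?_, ?_, ?_⟩
    · simp only [List.length_take, List.length_drop, hz]; omega
    · simp only [hv]
      rw [List.take_take, min_eq_left (by omega : N ≤ N + 1)]
    · simp only [hv]
      rw [List.drop_take, List.drop_drop]
      norm_num
  obtain ⟨c₁, hbc₁, h2c₁⟩ := closed_spec hc₁ (by omega)
  obtain ⟨c₂, hbc₂, h2c₂⟩ := closed_spec hc₂ (by omega)
  have ha0 : mrs (v 0) = u₁.length := by rw [hv0]; exact mrs_eq_frontier hbc₁ h2c₁ hf₁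
  have hai : mrs (v i) = u₂.length := by rw [hvi]; exact mrs_eq_frontier hbc₂ h2c₂ hf₂
  have hp0 : mrp (v 0) = u₁.length := by rw [hv0]; exact mrp_eq_frontier hbc₁ h2c₁ hf₁
  have hpi : mrp (v i) = u₂.length := by rw [hvi]; exact mrp_eq_frontier hbc₂ h2c₂ hf₂
  set S := {u : List A | u <:+: z ∧ u.length = N ∧ IsOpenWord u} with hS
  have hSfin : S.Finite := by
    apply Set.Finite.subset z.sublists.finite_toSet
    intro u hu
    have hu' : u <:+: z := hu.1
    show u ∈ z.sublists
    rw [List.mem_sublists]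
    exact hu'.sublist
  have hmemS : ∀ j, j ≤ i → ¬ IsClosedWord (v j) → v j ∈ S := by
    intro j hj hop
    have hL := hvlen j hj
    refine ⟨?_, hL, ?_, hop⟩
    · simp only [hv]
      exact (List.take_prefix _ _).isInfix.trans (List.drop_suffix _ _).isInfix
    · intro hnil
      rw [hnil] at hL
      simp only [List.length_nil] at hL
      omega
  have stepSuf : ∀ j, j < i → ∀ t, 1 ≤ t → RSuf (v (j+1)) t → RSuf (v j) (t-1) := by
    intro j hj t h1 ht
    obtain ⟨hy, e1, e2⟩ := hedge j hj
    rw [← e1]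
    exact RSuf_step hy (by rwa [e2]) h1
  have stepSufClosed : ∀ j, j < i → IsClosedWord (v j) → mrs (v (j+1)) ≤ mrs (v j) := by
    intro j hj hcl
    obtain ⟨hy, e1, e2⟩ := hedge j hj
    obtain ⟨u0, hb0, h20⟩ := closed_spec hcl (by rw [hvlen j hj.le]; omega)
    by_cases h0 : mrs (v (j+1)) = 0
    · omega
    · have hr := mrs_spec h0
      have h4 : u0.length ≤ mrs (v j) := le_mrs (border_RSuf hb0)
      rw [← e1] at hb0 h20
      have hr2 : RSuf (((z.drop j).take (N+1)).drop 1) (mrs (v (j+1))) := by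
        rw [e2]; exact hr
      have h3 := RSuf_step_closed hy hb0 h20 hr2
      omega
  have stepPre : ∀ j, j < i → ∀ t, 1 ≤ t → RPre (v j) t → RPre (v (j+1)) (t-1) := by
    intro j hj t h1 ht
    obtain ⟨hy, e1, e2⟩ := hedge j hj
    rw [← e2]
    exact RPre_step hy (by rwa [e1]) h1
  have stepPreClosed : ∀ j, j < i → IsClosedWord (v (j+1)) → mrp (v j) ≤ mrp (v (j+1)) := by
    intro j hj hcl
    obtain ⟨hy, e1, e2⟩ := hedge j hj
    obtain ⟨u0, hb0, h20⟩ := closed_spec hcl (by rw [hvlen (j+1) (by omega)]; omega)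
    by_cases h0 : mrp (v j) = 0
    · omega
    · have hr := mrp_spec h0
      have h4 : u0.length ≤ mrp (v (j+1)) := le_mrp (border_RPre hb0)
      rw [← e2] at hb0 h20
      have hr2 : RPre (((z.drop j).take (N+1)).take N) (mrp (v j)) := by
        rw [e1]; exact hr
      have h3 := RPre_step_closed hy hb0 h20 hr2
      omega
  rcases le_total u₁.length u₂.length with hk | hk
  · -- increasing case : witnesses via mrs
    have key : ∀ m, u₁.length ≤ m → m < u₂.length → ∃ w', w' ∈ S ∧ mrs w' = m := by
      intro m hm1 hm2
      obtain ⟨j0, hj0le, hPj0, hmax⟩ :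
          ∃ j0, j0 ≤ i ∧ mrs (v j0) ≤ m ∧ ∀ k, j0 < k → k ≤ i → ¬ (mrs (v k) ≤ m) := by
        refine ⟨Nat.findGreatest (fun j => mrs (v j) ≤ m) i,
          Nat.findGreatest_le (P := fun j => mrs (v j) ≤ m) i,
          Nat.findGreatest_spec (P := fun j => mrs (v j) ≤ m) (Nat.zero_le i) ?_,
          fun k hk hki => Nat.findGreatest_is_greatest (P := fun j => mrs (v j) ≤ m) hk hki⟩
        show mrs (v 0) ≤ m
        rw [ha0]; exact hm1
      have hj0i : j0 < i := by
        rcases lt_or_eq_of_le hj0le with h | h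
        · exact h
        · exfalso; rw [h, hai] at hPj0; omega
      have hnot : ¬ (mrs (v (j0+1)) ≤ m) := hmax (j0+1) (by omega) (by omega)
      push_neg at hnot
      have h0 : mrs (v (j0+1)) ≠ 0 := by omega
      have hr' : RSuf (v (j0+1)) (m+1) := RSuf_mono (mrs_spec h0) (by omega)
      have hstep := stepSuf j0 hj0i (m+1) (by omega) hr'
      norm_num at hstep
      have hle : m ≤ mrs (v j0) := le_mrs hstep
      have heq : mrs (v j0) = m := by omega
      have hop : ¬ IsClosedWord (v j0) := by
        intro hcl
        have := stepSufClosed j0 hj0i hcl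
        omega
      exact ⟨v j0, hmemS j0 hj0le hop, heq⟩
    have key' : ∀ m ∈ Finset.Ico u₁.length u₂.length, ∃ w', w' ∈ S ∧ mrs w' = m := by
      intro m hm
      rw [Finset.mem_Ico] at hm
      exact key m hm.1 hm.2
    choose! g hg using key'
    have hcount : ((Finset.Ico u₁.length u₂.length : Finset ℕ) : Set ℕ).ncard ≤ S.ncard := by
      refine Set.ncard_le_ncard_of_injOn g ?_ ?_ hSfin
      · intro a ha
        exact (hg a (by simpa using ha)).1
      · intro a ha b hb hab
        have h1 := (hg a (by simpa using ha)).2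
        have h2 := (hg b (by simpa using hb)).2
        rw [← h1, ← h2, hab]
    rw [Set.ncard_coe_finset, Nat.card_Ico] at hcount
    have hfin : u₂.length - u₁.length ≤ n := le_trans hcount hopen
    rw [abs_le]
    omega
  · -- decreasing case : witnesses via mrp
    have key : ∀ m, u₂.length ≤ m → m < u₁.length → ∃ w', w' ∈ S ∧ mrp w' = m := by
      intro m hm1 hm2
      have hex : ∃ j, j ≤ i ∧ mrp (v j) ≤ m := ⟨i, le_refl i, by rw [hpi]; exact hm1⟩
      obtain ⟨j0, hj0le, hj0m, hmin⟩ :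
          ∃ j0, j0 ≤ i ∧ mrp (v j0) ≤ m ∧ ∀ k, k < j0 → ¬ (k ≤ i ∧ mrp (v k) ≤ m) :=
        ⟨Nat.find hex, (Nat.find_spec hex).1, (Nat.find_spec hex).2,
          fun k hk => Nat.find_min hex hk⟩
      have hj0pos : 1 ≤ j0 := by
        by_contra h
        push_neg at h
        have h0 : j0 = 0 := by omega
        rw [h0, hp0] at hj0m
        omega
      have hprev : ¬ (j0 - 1 ≤ i ∧ mrp (v (j0-1)) ≤ m) := hmin (j0-1) (by omega)
      have hprev' : m + 1 ≤ mrp (v (j0-1)) := by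
        by_contra h
        push_neg at h
        exact hprev ⟨by omega, by omega⟩
      have h0 : mrp (v (j0-1)) ≠ 0 := by omega
      have hr' : RPre (v (j0-1)) (m+1) := RPre_mono (mrp_spec h0) (by omega)
      have hji : j0 - 1 < i := by omega
      have hstep := stepPre (j0-1) hji (m+1) (by omega) hr'
      rw [show j0 - 1 + 1 = j0 from by omega] at hstep
      norm_num at hstep
      have hle : m ≤ mrp (v j0) := le_mrp hstep
      have heq : mrp (v j0) = m := by omega
      have hop : ¬ IsClosedWord (v j0) := by
        intro hcl
        have h5 := stepPreClosed (j0-1) hji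
          (by rw [show j0 - 1 + 1 = j0 from by omega]; exact hcl)
        rw [show j0 - 1 + 1 = j0 from by omega] at h5
        omega
      exact ⟨v j0, hmemS j0 hj0le hop, heq⟩
    have key' : ∀ m ∈ Finset.Ico u₂.length u₁.length, ∃ w', w' ∈ S ∧ mrp w' = m := by
      intro m hm
      rw [Finset.mem_Ico] at hm
      exact key m hm.1 hm.2
    choose! g hg using key'
    have hcount : ((Finset.Ico u₂.length u₁.length : Finset ℕ) : Set ℕ).ncard ≤ S.ncard := by
      refine Set.ncard_le_ncard_of_injOn g ?_ ?_ hSfin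
      · intro a ha
        exact (hg a (by simpa using ha)).1
      · intro a ha b hb hab
        have h1 := (hg a (by simpa using ha)).2
        have h2 := (hg b (by simpa using hb)).2
        rw [← h1, ← h2, hab]
    rw [Set.ncard_coe_finset, Nat.card_Ico] at hcount
    have hfin : u₁.length - u₂.length ≤ n := le_trans hcount hopen
    rw [abs_le]
    omega
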